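/- arXiv:1908.07925 — 2 statements merged into one kernel-verified Lean document; each statement's English description precedes it below -/
import Mathlib

section
/- Let [A] be an interval matrix with midpoint Ac = I (the identity matrix) and radius Δ = (1/2)(Ā−A̲), and suppose Δ is irreducible. Then [A] is strongly column sufficient if and only if ρ(Δ) ≤ 1. -/
open Matrix

/-- Spectral radius of a real square matrix (via its complex spectrum). -/
noncomputable def specRad {n : ℕ} (A : Matrix (Fin n) (Fin n) ℝ) : ℝ :=
  (spectralRadius ℂ (A.map (algebraMap ℝ ℂ))).toReal

/-- `A` is an M-matrix: `A = s•I - N` with `N ≥ 0` and `s > ρ(N)`. -/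
def IsMMatrix {n : ℕ} (A : Matrix (Fin n) (Fin n) ℝ) : Prop :=
  ∃ (s : ℝ) (N : Matrix (Fin n) (Fin n) ℝ),
    (∀ i j, 0 ≤ N i j) ∧ A = s • (1 : Matrix (Fin n) (Fin n) ℝ) - N ∧ specRad N < s

/-- `A` is an M0-matrix: `A = s•I - N` with `N ≥ 0` and `s ≥ ρ(N)`. -/
def IsM0Matrix {n : ℕ} (A : Matrix (Fin n) (Fin n) ℝ) : Prop :=
  ∃ (s : ℝ) (N : Matrix (Fin n) (Fin n) ℝ),
    (∀ i j, 0 ≤ N i j) ∧ A = s • (1 : Matrix (Fin n) (Fin n) ℝ) - N ∧ specRad N ≤ s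

/-- Comparison matrix. -/
def compMatrix {n : ℕ} (A : Matrix (Fin n) (Fin n) ℝ) : Matrix (Fin n) (Fin n) ℝ :=
  fun i j => if i = j then |A i i| else -|A i j|

def IsHMatrix {n : ℕ} (A : Matrix (Fin n) (Fin n) ℝ) : Prop :=
  IsMMatrix (compMatrix A)

def IsSMatrix {n : ℕ} (A : Matrix (Fin n) (Fin n) ℝ) : Prop :=
  ∃ x : Fin n → ℝ, (∀ i, 0 < x i) ∧ (∀ i, 0 < A.mulVec x i)

def Copositive {n : ℕ} (A : Matrix (Fin n) (Fin n) ℝ) : Prop :=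
  ∀ x : Fin n → ℝ, (∀ i, 0 ≤ x i) → 0 ≤ x ⬝ᵥ A.mulVec x

def StrictlyCopositive {n : ℕ} (A : Matrix (Fin n) (Fin n) ℝ) : Prop :=
  ∀ x : Fin n → ℝ, (∀ i, 0 ≤ x i) → x ≠ 0 → 0 < x ⬝ᵥ A.mulVec x

def Semimonotone {n : ℕ} (A : Matrix (Fin n) (Fin n) ℝ) : Prop :=
  ∀ I : Finset (Fin n), I.Nonempty →
    ¬ ∃ x : ↥I → ℝ,
      (∀ i, (A.submatrix ((↑) : ↥I → Fin n) ((↑) : ↥I → Fin n)).mulVec x i < 0) ∧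
      (∀ i, 0 ≤ x i)

def PrincipallyNondegenerate {n : ℕ} (A : Matrix (Fin n) (Fin n) ℝ) : Prop :=
  ∀ I : Finset (Fin n), I.Nonempty →
    (A.submatrix ((↑) : ↥I → Fin n) ((↑) : ↥I → Fin n)).det ≠ 0

/-- A nonnegative matrix is irreducible if `(I + A)^(n-1) > 0` entrywise. -/
def IrreducibleMat {n : ℕ} (A : Matrix (Fin n) (Fin n) ℝ) : Prop :=
  ∀ i j, 0 < ((1 + A) ^ (n - 1)) i j

/-- The block matrix `[[A_II, -A_IJ], [-A_JI, A_JJ]]`. -/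
def csBlock {n : ℕ} (A : Matrix (Fin n) (Fin n) ℝ) (I J : Finset (Fin n)) :
    Matrix (↥I ⊕ ↥J) (↥I ⊕ ↥J) ℝ :=
  Matrix.fromBlocks
    (A.submatrix ((↑) : ↥I → Fin n) ((↑) : ↥I → Fin n))
    (-(A.submatrix ((↑) : ↥I → Fin n) ((↑) : ↥J → Fin n)))
    (-(A.submatrix ((↑) : ↥J → Fin n) ((↑) : ↥I → Fin n)))
    (A.submatrix ((↑) : ↥J → Fin n) ((↑) : ↥J → Fin n))

def ColumnSufficient {n : ℕ} (A : Matrix (Fin n) (Fin n) ℝ) : Prop :=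
  ∀ I J : Finset (Fin n), Disjoint I J → (I ∪ J).Nonempty →
    ¬ ∃ x : (↥I ⊕ ↥J) → ℝ,
      (∀ k, (csBlock A I J).mulVec x k ≤ 0) ∧
      (csBlock A I J).mulVec x ≠ 0 ∧
      (∀ k, 0 < x k)

def IsR0Matrix {n : ℕ} (A : Matrix (Fin n) (Fin n) ℝ) : Prop :=
  ∀ I : Finset (Fin n), I.Nonempty →
    ¬ ∃ x : ↥I → ℝ,
      (∀ i, (A.submatrix ((↑) : ↥I → Fin n) ((↑) : ↥I → Fin n)).mulVec x i = 0) ∧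
      (∀ j : ↥(Iᶜ : Finset (Fin n)),
        0 ≤ (A.submatrix ((↑) : ↥(Iᶜ : Finset (Fin n)) → Fin n) ((↑) : ↥I → Fin n)).mulVec x j) ∧
      (∀ i, 0 < x i)

def IsRMatrix {n : ℕ} (A : Matrix (Fin n) (Fin n) ℝ) : Prop :=
  ∀ I : Finset (Fin n), I.Nonempty →
    ¬ ∃ (x : ↥I → ℝ) (t : ℝ),
      (∀ i, (A.submatrix ((↑) : ↥I → Fin n) ((↑) : ↥I → Fin n)).mulVec x i + t = 0) ∧
      (∀ j : ↥(Iᶜ : Finset (Fin n)),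
        0 ≤ (A.submatrix ((↑) : ↥(Iᶜ : Finset (Fin n)) → Fin n) ((↑) : ↥I → Fin n)).mulVec x j + t) ∧
      (∀ i, 0 < x i) ∧ 0 ≤ t

def PosDefMat {n : ℕ} (A : Matrix (Fin n) (Fin n) ℝ) : Prop :=
  ∀ x : Fin n → ℝ, x ≠ 0 → 0 < x ⬝ᵥ A.mulVec x

def PosSemidefMat {n : ℕ} (A : Matrix (Fin n) (Fin n) ℝ) : Prop :=
  ∀ x : Fin n → ℝ, 0 ≤ x ⬝ᵥ A.mulVec x

/-- Membership of `A` in the interval matrix `[Al, Au]`. -/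
def memInterval {n : ℕ} (Al Au A : Matrix (Fin n) (Fin n) ℝ) : Prop :=
  ∀ i j, Al i j ≤ A i j ∧ A i j ≤ Au i j

/-- The mixed block matrix `[[Al_II, -Au_IJ], [-Au_JI, Al_JJ]]`. -/
def csMixedBlock {n : ℕ} (Al Au : Matrix (Fin n) (Fin n) ℝ) (I J : Finset (Fin n)) :
    Matrix (↥I ⊕ ↥J) (↥I ⊕ ↥J) ℝ :=
  Matrix.fromBlocks
    (Al.submatrix ((↑) : ↥I → Fin n) ((↑) : ↥I → Fin n))
    (-(Au.submatrix ((↑) : ↥I → Fin n) ((↑) : ↥J → Fin n)))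
    (-(Au.submatrix ((↑) : ↥J → Fin n) ((↑) : ↥I → Fin n)))
    (Al.submatrix ((↑) : ↥J → Fin n) ((↑) : ↥J → Fin n))


/-! With `Ac = 1` the interval matrix is `{A : |A - 1| ≤ Δ}`. If `ρ(Δ) > 1`, the moduli of a
dominant eigenvector, smoothed by the positive matrix `(1 + Δ)^(n-1)`, give `y > 0` with
`Δ y ≥ ρ(Δ) y`, so `(1 - Δ) y < 0` and the lower endpoint `1 - Δ` is not column sufficient.
Conversely, a violating `x > 0` for `B = csBlock A I J` satisfies `x ≤ (1 - B) x ≤ Δ_KK x`;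
padded with zeros it is a nonnegative subinvariant vector of `Δ`. For irreducible `Δ` such a
vector is invariant unless `ρ(Δ) > 1` (Collatz–Wielandt), and invariance forces `Bx ≥ 0`,
hence `Bx = 0`. -/

open Filter Topology

theorem ofReal_le_spectralRadius_of_mul_pow_le_norm_pow {A : Type*} [NormedRing A]
    [NormedAlgebra ℂ A] [CompleteSpace A] (a : A) {γ c : ℝ} (hγ : 0 < γ) (hc : 0 ≤ c)
    (h : ∀ k : ℕ, γ * c ^ k ≤ ‖a ^ k‖) : ENNReal.ofReal c ≤ spectralRadius ℂ a := by
  have hlim : Tendsto (fun k : ℕ => ENNReal.ofReal (γ ^ (1 / k : ℝ) * c)) atTop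
      (𝓝 (ENNReal.ofReal c)) := by
    refine ENNReal.tendsto_ofReal ?_
    simpa using ((Real.continuousAt_const_rpow hγ.ne').tendsto.comp
      tendsto_one_div_atTop_nhds_zero_nat).mul_const c
  refine le_of_tendsto_of_tendsto hlim
    (spectrum.pow_norm_pow_one_div_tendsto_nhds_spectralRadius a) ?_
  filter_upwards [eventually_ne_atTop 0] with k hk
  refine ENNReal.ofReal_le_ofReal ?_
  calc γ ^ (1 / k : ℝ) * c = (γ * c ^ k) ^ (1 / k : ℝ) := by
        rw [Real.mul_rpow hγ.le (pow_nonneg hc k), one_div, Real.pow_rpow_inv_natCast hc hk]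
    _ ≤ ‖a ^ k‖ ^ (1 / k : ℝ) := by gcongr; exact h k

namespace Matrix

variable {ι : Type*} [Fintype ι]

theorem mulVec_mono_of_nonneg {N : Matrix ι ι ℝ} (hN : ∀ i j, 0 ≤ N i j) {u v : ι → ℝ}
    (h : u ≤ v) : N *ᵥ u ≤ N *ᵥ v :=
  fun i => dotProduct_le_dotProduct_of_nonneg_left h fun j => hN i j

theorem mulVec_pos_of_pos {P : Matrix ι ι ℝ} (hP : ∀ i j, 0 < P i j) {x : ι → ℝ}
    (hx : 0 ≤ x) (hx0 : x ≠ 0) (i : ι) : 0 < (P *ᵥ x) i := by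
  obtain ⟨j, hj⟩ := (Pi.lt_def.1 (hx.lt_of_ne' hx0)).2
  exact Finset.sum_pos' (fun k _ => mul_nonneg (hP i k).le (hx k))
    ⟨j, Finset.mem_univ _, mul_pos (hP i j) hj⟩

theorem smul_pow_le_pow_mulVec {N : Matrix ι ι ℝ} [DecidableEq ι] (hN : ∀ i j, 0 ≤ N i j)
    {w : ι → ℝ} {c : ℝ} (hc : 0 ≤ c) (h : c • w ≤ N *ᵥ w) (k : ℕ) :
    c ^ k • w ≤ (N ^ k) *ᵥ w := by
  induction k with
  | zero => simp
  | succ k ih =>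
    calc c ^ (k + 1) • w = c ^ k • (c • w) := by rw [pow_succ, mul_smul]
      _ ≤ c ^ k • (N *ᵥ w) := smul_le_smul_of_nonneg_left h (pow_nonneg hc k)
      _ = N *ᵥ (c ^ k • w) := (mulVec_smul N _ w).symm
      _ ≤ N *ᵥ (N ^ k *ᵥ w) := mulVec_mono_of_nonneg hN ih
      _ = N ^ (k + 1) *ᵥ w := by rw [mulVec_mulVec, pow_succ']

theorem mulVec_one_add_pow_mulVec_comm [DecidableEq ι] (N : Matrix ι ι ℝ) (m : ℕ)
    (v : ι → ℝ) : N *ᵥ ((1 + N) ^ m *ᵥ v) = (1 + N) ^ m *ᵥ (N *ᵥ v) := by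
  rw [mulVec_mulVec, mulVec_mulVec,
    (((Commute.one_right N).add_right (Commute.refl N)).pow_right m).eq]

end Matrix

section LinftyOpNorm

attribute [local instance] Matrix.linftyOpNormedRing Matrix.linftyOpNormedAlgebra

theorem le_specRad_of_smul_le_mulVec {n : ℕ} {N : Matrix (Fin n) (Fin n) ℝ}
    (hN : ∀ i j, 0 ≤ N i j) {w : Fin n → ℝ} (hw : 0 ≤ w) (hw0 : w ≠ 0) {c : ℝ}
    (hc : 0 ≤ c) (h : c • w ≤ N *ᵥ w) : c ≤ specRad N := by
  have : CompleteSpace (Matrix (Fin n) (Fin n) ℂ) := FiniteDimensional.complete ℂ _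
  obtain ⟨i, hi⟩ := (Pi.lt_def.1 (hw.lt_of_ne' hw0)).2
  have : Nonempty (Fin n) := ⟨i⟩
  set M := N.map (algebraMap ℝ ℂ)
  set wC : Fin n → ℂ := algebraMap ℝ ℂ ∘ w
  have hwC : 0 < ‖wC‖ :=
    hi.trans_le (by simpa [wC, abs_of_pos hi] using norm_le_pi_norm wC i)
  have hgrowth : ∀ k : ℕ, w i / ‖wC‖ * c ^ k ≤ ‖M ^ k‖ := by
    intro k
    rw [div_mul_eq_mul_div, div_le_iff₀ hwC]
    calc w i * c ^ k = (c ^ k • w) i := by simp [mul_comm]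
      _ ≤ (N ^ k *ᵥ w) i := smul_pow_le_pow_mulVec hN hc h k i
      _ ≤ ‖(M ^ k *ᵥ wC) i‖ := by
        rw [← Matrix.map_pow, ← RingHom.map_mulVec]
        simpa using le_abs_self _
      _ ≤ ‖M ^ k *ᵥ wC‖ := norm_le_pi_norm _ i
      _ ≤ ‖M ^ k‖ * ‖wC‖ := Matrix.linfty_opNorm_mulVec _ _
  have hρ := ofReal_le_spectralRadius_of_mul_pow_le_norm_pow M (div_pos hi hwC) hc hgrowth
  exact (ENNReal.ofReal_le_iff_le_toReal
    (ne_top_of_le_ne_top ENNReal.coe_ne_top (spectrum.spectralRadius_le_nnnorm M))).1 hρ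

theorem exists_specRad_smul_le_mulVec {n : ℕ} [NeZero n] {N : Matrix (Fin n) (Fin n) ℝ}
    (hN : ∀ i j, 0 ≤ N i j) :
    ∃ x : Fin n → ℝ, 0 ≤ x ∧ x ≠ 0 ∧ specRad N • x ≤ N *ᵥ x := by
  have : CompleteSpace (Matrix (Fin n) (Fin n) ℂ) := FiniteDimensional.complete ℂ _
  set M := N.map (algebraMap ℝ ℂ)
  obtain ⟨z, hz, hzρ⟩ := spectrum.exists_nnnorm_eq_spectralRadius M
  have hρ : specRad N = ‖z‖ := by rw [specRad, ← hzρ, ENNReal.coe_toReal, coe_nnnorm]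
  rw [← Matrix.spectrum_toLin', ← Module.End.hasEigenvalue_iff_mem_spectrum] at hz
  obtain ⟨v, hv, hv0⟩ := hz.exists_hasEigenvector
  rw [Module.End.mem_eigenspace_iff, Matrix.toLin'_apply] at hv
  refine ⟨fun i => ‖v i‖, fun i => norm_nonneg _, fun h => hv0 ?_, fun i => ?_⟩
  · funext i
    simpa using congrFun h i
  · calc (specRad N • fun i => ‖v i‖) i = ‖(M *ᵥ v) i‖ := by simp [hv, hρ]
      _ ≤ ∑ j, ‖M i j * v j‖ := norm_sum_le (s := Finset.univ) (fun j => M i j * v j)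
      _ = (N *ᵥ fun j => ‖v j‖) i := by
        simp [M, Matrix.mulVec, dotProduct, abs_of_nonneg (hN _ _)]

end LinftyOpNorm

section Irreducible

variable {n : ℕ} {N : Matrix (Fin n) (Fin n) ℝ}

theorem IrreducibleMat.one_add_pow_mulVec_pos (hirr : IrreducibleMat N) {x : Fin n → ℝ}
    (hx : 0 ≤ x) (hx0 : x ≠ 0) (i : Fin n) : 0 < ((1 + N) ^ (n - 1) *ᵥ x) i :=
  Matrix.mulVec_pos_of_pos hirr hx hx0 i

theorem one_lt_specRad_of_lt_mulVec [NeZero n] (hN : ∀ i j, 0 ≤ N i j) {w : Fin n → ℝ}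
    (hw : ∀ i, 0 < w i) (h : ∀ i, w i < (N *ᵥ w) i) : 1 < specRad N := by
  obtain ⟨i₀, hi₀⟩ := Finite.exists_min fun i => (N *ᵥ w) i / w i
  refine ((one_lt_div (hw i₀)).2 (h i₀)).trans_le <|
    le_specRad_of_smul_le_mulVec hN (fun i => (hw i).le) (fun h0 => (hw 0).ne' (congrFun h0 0))
      (div_nonneg ((hw i₀).trans (h i₀)).le (hw i₀).le) fun i => ?_
  simpa using (le_div_iff₀ (hw i)).1 (hi₀ i)

theorem IrreducibleMat.mulVec_eq_of_le_mulVec (hN : ∀ i j, 0 ≤ N i j) (hirr : IrreducibleMat N)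
    (hρ : specRad N ≤ 1) {y : Fin n → ℝ} (hy : 0 ≤ y) (h : y ≤ N *ᵥ y) :
    N *ᵥ y = y := by
  by_contra hne
  have hy0 : y ≠ 0 := by
    rintro rfl
    simp at hne
  have : NeZero n := ⟨by rintro rfl; exact hy0 (Subsingleton.elim _ _)⟩
  refine hρ.not_gt <|
    one_lt_specRad_of_lt_mulVec hN (hirr.one_add_pow_mulVec_pos hy hy0) fun i => ?_
  have hgap := hirr.one_add_pow_mulVec_pos (sub_nonneg.2 h) (sub_ne_zero.2 hne) i
  rw [Matrix.mulVec_sub, Pi.sub_apply, ← Matrix.mulVec_one_add_pow_mulVec_comm] at hgap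
  linarith

theorem IrreducibleMat.exists_pos_specRad_smul_le_mulVec [NeZero n] (hN : ∀ i j, 0 ≤ N i j)
    (hirr : IrreducibleMat N) :
    ∃ y : Fin n → ℝ, (∀ i, 0 < y i) ∧ specRad N • y ≤ N *ᵥ y := by
  obtain ⟨x, hx, hx0, hρx⟩ := exists_specRad_smul_le_mulVec hN
  refine ⟨_, hirr.one_add_pow_mulVec_pos hx hx0, ?_⟩
  rw [Matrix.mulVec_one_add_pow_mulVec_comm, ← Matrix.mulVec_smul]
  exact Matrix.mulVec_mono_of_nonneg (fun i j => (hirr i j).le) hρx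

end Irreducible

theorem ColumnSufficient.mulVec_eq_zero {n : ℕ} {A : Matrix (Fin n) (Fin n) ℝ}
    (hA : ColumnSufficient A) {x : Fin n → ℝ} (hx : ∀ i, 0 < x i) (h : A *ᵥ x ≤ 0) :
    A *ᵥ x = 0 := by
  rcases isEmpty_or_nonempty (Fin n) with _ | ⟨⟨i₀⟩⟩
  · exact Subsingleton.elim _ _
  have hblock : ∀ i : (Finset.univ : Finset (Fin n)),
      (csBlock A Finset.univ ∅ *ᵥ Sum.elim (x ∘ (↑)) 0) (Sum.inl i) = (A *ᵥ x) i := by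
    intro i
    simp [csBlock, Matrix.mulVec, dotProduct, Fintype.sum_sum_type]
  by_contra hne
  obtain ⟨i, hi⟩ : ∃ i, (A *ᵥ x) i ≠ 0 := Function.ne_iff.1 hne
  refine hA Finset.univ ∅ (Finset.disjoint_empty_right _) ⟨i₀, by simp⟩
    ⟨Sum.elim (x ∘ (↑)) 0, ?_, fun h0 => hi ?_, ?_⟩
  · rintro (k | ⟨k, hk⟩)
    · exact (hblock k).trans_le (h k)
    · simp at hk
  · simpa [hblock] using congrFun h0 (Sum.inl ⟨i, Finset.mem_univ i⟩)
  · rintro (k | ⟨k, hk⟩)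
    · exact hx k
    · simp at hk

section CsBlock

variable {n : ℕ} {I J : Finset (Fin n)}

def csIndex (I J : Finset (Fin n)) : ↥I ⊕ ↥J → Fin n :=
  Sum.elim (↑) (↑)

theorem csIndex_injective (hIJ : Disjoint I J) : Function.Injective (csIndex I J) := by
  rintro (a | a) (b | b) h <;> simp only [csIndex, Sum.elim_inl, Sum.elim_inr] at h
  · exact congrArg Sum.inl (Subtype.ext h)
  · exact (Finset.disjoint_left.1 hIJ a.2 (h ▸ b.2)).elim
  · exact (Finset.disjoint_left.1 hIJ b.2 (h ▸ a.2)).elim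
  · exact congrArg Sum.inr (Subtype.ext h)

/-- `csBlock A I J` is `D A_KK D` for the signature matrix `D = diag(1, -1)`, so its deviation
from the identity has the same moduli as that of `A`. -/
theorem abs_csBlock_sub_one_apply (A : Matrix (Fin n) (Fin n) ℝ) (hIJ : Disjoint I J)
    (k l : ↥I ⊕ ↥J) :
    |csBlock A I J k l - (1 : Matrix (↥I ⊕ ↥J) (↥I ⊕ ↥J) ℝ) k l| =
      |A (csIndex I J k) (csIndex I J l) -
        (1 : Matrix (Fin n) (Fin n) ℝ) (csIndex I J k) (csIndex I J l)| := by
  rw [← Matrix.submatrix_one _ (csIndex_injective hIJ), Matrix.submatrix_apply]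
  rcases k with a | a <;> rcases l with b | b <;>
    simp only [csIndex, csBlock, Sum.elim_inl, Sum.elim_inr, Matrix.fromBlocks_apply₁₁,
      Matrix.fromBlocks_apply₁₂, Matrix.fromBlocks_apply₂₁, Matrix.fromBlocks_apply₂₂,
      Matrix.submatrix_apply, Matrix.neg_apply]
  · rw [Matrix.one_apply_ne ((csIndex_injective hIJ).ne Sum.inl_ne_inr), sub_zero, sub_zero,
      abs_neg]
  · rw [Matrix.one_apply_ne ((csIndex_injective hIJ).ne Sum.inr_ne_inl), sub_zero, sub_zero,
      abs_neg]

end CsBlock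

theorem columnSufficient_of_abs_sub_one_le {n : ℕ} {A Δ : Matrix (Fin n) (Fin n) ℝ}
    (hirr : IrreducibleMat Δ) (hρ : specRad Δ ≤ 1)
    (hA : ∀ i j, |A i j - (1 : Matrix (Fin n) (Fin n) ℝ) i j| ≤ Δ i j) :
    ColumnSufficient A := by
  rintro I J hIJ - ⟨x, hBx, hBx0, hx⟩
  set e := csIndex I J
  have he : Function.Injective e := csIndex_injective hIJ
  have hΔ : ∀ i j, 0 ≤ Δ i j := fun i j => (abs_nonneg _).trans (hA i j)
  set y : Fin n → ℝ := Function.extend e x 0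
  have hy_e : ∀ k, y (e k) = x k := he.extend_apply x 0
  have hy_ne : ∀ i, (¬∃ k, e k = i) → y i = 0 := Function.extend_apply' x (0 : Fin n → ℝ)
  have hΔy : ∀ k, (Δ *ᵥ y) (e k) = ∑ l, Δ (e k) (e l) * x l := fun k =>
    (Fintype.sum_of_injective e he _ _ (fun i hi => by simp [hy_ne i hi])
      (fun l => by rw [hy_e])).symm
  have hbound : ∀ k, x k - (csBlock A I J *ᵥ x) k ≤ (Δ *ᵥ y) (e k) := by
    intro k
    calc x k - (csBlock A I J *ᵥ x) k = ((1 - csBlock A I J) *ᵥ x) k := by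
          simp [Matrix.sub_mulVec]
      _ ≤ ∑ l, Δ (e k) (e l) * x l := by
          refine Finset.sum_le_sum fun l _ => mul_le_mul_of_nonneg_right ?_ (hx l).le
          change (1 - csBlock A I J) k l ≤ _
          rw [Matrix.sub_apply, ← neg_sub]
          exact (neg_le_abs _).trans ((abs_csBlock_sub_one_apply A hIJ k l).trans_le (hA _ _))
      _ = (Δ *ᵥ y) (e k) := (hΔy k).symm
  have hy : 0 ≤ y := by
    intro i
    by_cases hi : ∃ k, e k = i
    · obtain ⟨k, rfl⟩ := hi
      exact (hy_e k).symm ▸ (hx k).le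
    · exact (hy_ne i hi).ge
  have hsub : y ≤ Δ *ᵥ y := by
    intro i
    by_cases hi : ∃ k, e k = i
    · obtain ⟨k, rfl⟩ := hi
      linarith [hy_e k, hbound k, hBx k]
    · rw [hy_ne i hi]
      exact dotProduct_nonneg_of_nonneg (fun j => hΔ i j) hy
  have hfix := hirr.mulVec_eq_of_le_mulVec hΔ hρ hy hsub
  refine hBx0 (funext fun k => le_antisymm (hBx k) ?_)
  have hk := hbound k
  rw [hfix, hy_e] at hk
  change 0 ≤ (csBlock A I J *ᵥ x) k
  linarith

theorem not_columnSufficient_one_sub_of_one_lt_specRad {n : ℕ} {N : Matrix (Fin n) (Fin n) ℝ}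
    (hN : ∀ i j, 0 ≤ N i j) (hirr : IrreducibleMat N) (hρ : 1 < specRad N) :
    ¬ColumnSufficient (1 - N) := by
  intro hcs
  have : NeZero n := ⟨by rintro rfl; norm_num [specRad] at hρ⟩
  obtain ⟨y, hy, hρy⟩ := hirr.exists_pos_specRad_smul_le_mulVec hN
  have hneg : ∀ i, ((1 - N) *ᵥ y) i < 0 := by
    intro i
    have := hρy i
    simp only [Pi.smul_apply, smul_eq_mul] at this
    simp only [Matrix.sub_mulVec, Matrix.one_mulVec, Pi.sub_apply]
    nlinarith [hy i]
  exact (hneg 0).ne (congrFun (hcs.mulVec_eq_zero hy fun i => (hneg i).le) 0)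

theorem memInterval_sub_add_iff {n : ℕ} {C Δ A : Matrix (Fin n) (Fin n) ℝ} :
    memInterval (C - Δ) (C + Δ) A ↔ ∀ i j, |A i j - C i j| ≤ Δ i j := by
  simp only [memInterval, abs_sub_le_iff, Matrix.sub_apply, Matrix.add_apply]
  refine forall₂_congr fun i j => ?_
  constructor <;> rintro ⟨h₁, h₂⟩ <;> constructor <;> linarith

theorem stmt_15 {n : ℕ} (Al Au : Matrix (Fin n) (Fin n) ℝ)
    (hle : ∀ i j, Al i j ≤ Au i j)
    (Ac : Matrix (Fin n) (Fin n) ℝ) (hAc : Ac = (1/2 : ℝ) • (Al + Au)) (Δ : Matrix (Fin n) (Fin n) ℝ) (hΔ : Δ = (1/2 : ℝ) • (Au - Al))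
    (hI : Ac = (1 : Matrix (Fin n) (Fin n) ℝ)) (hirr : IrreducibleMat Δ) :
    (∀ A : Matrix (Fin n) (Fin n) ℝ, memInterval Al Au A → ColumnSufficient A) ↔ specRad Δ ≤ 1 := by
  have hAl : Al = 1 - Δ := by rw [← hI, hAc, hΔ]; module
  have hAu : Au = 1 + Δ := by rw [← hI, hAc, hΔ]; module
  have hΔ_nonneg : ∀ i j, 0 ≤ Δ i j := fun i j => by
    have := hle i j
    simp only [hΔ, Matrix.smul_apply, Matrix.sub_apply, smul_eq_mul]
    linarith
  constructor
  · intro h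
    by_contra! hρ
    exact not_columnSufficient_one_sub_of_one_lt_specRad hΔ_nonneg hirr hρ
      (hAl ▸ h Al fun i j => ⟨le_rfl, hle i j⟩)
  · intro hρ A hA
    rw [hAl, hAu, memInterval_sub_add_iff] at hA
    exact columnSufficient_of_abs_sub_one_le hirr hρ hA
end

section
/- Let [A] be an interval matrix with midpoint Ac = (1/2)(A̲+Ā), and suppose Ac is an M-matrix. Then [A] is strongly an R0-matrix if and only if every A ∈ [A] is an H-matrix. Moreover, if Ac = I (the identity matrix) with radius Δ = (1/2)(Ā−A̲), then [A] is strongly an R0-matrix if and only if ρ(Δ) < 1. -/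
open Matrix

/-!
Write the midpoint as `Ac = s • 1 - N` with `N ≥ 0` and `ρ(N) < s`, so that
`[A] = [Ac - Δ, Ac + Δ]`. Both strong properties are equivalent to `ρ(N + Δ) < s`.

If `ρ(N + Δ) < s`, a positive vector `w` with `(N + Δ) w < s w` satisfies `⟨A⟩ w > 0` for every
`A ∈ [A]`, so every member is an H-matrix. An H-matrix is an R0-matrix: extending a solution
`x > 0` of `A_II x = 0` by zero gives `y ≥ 0`, `y ≠ 0` with `⟨A⟩ y ≤ 0`, which an M-matrix forbids.
If `ρ(N + Δ) ≥ s`, the spectral radius of `N + tΔ` crosses `s` at some `t ∈ [0, 1]`; a nonnegative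
Perron vector `v` of `N + tΔ` is then a null vector of `s • 1 - N - tΔ ∈ [A]`, and the support of
`v` shows that this matrix is not R0. For `Ac = 1` take `s = 1` and `N = 0`.

The Perron–Frobenius facts needed (a positive resolvent vector for `c > ρ(Q)`, the
Collatz–Wielandt bounds, a nonnegative eigenvector for `ρ(Q)`) come from Gelfand's formula and from
eigenvectors of the complexified matrix.
-/

open Filter Topology

-- `specRad` is computed in the Banach algebra of complex matrices; any algebra norm would do.
attribute [local instance] Matrix.linftyOpNormedRing Matrix.linftyOpNormedAlgebra

section Gelfand

variable {A : Type*} [NormedRing A] [NormedAlgebra ℂ A] [CompleteSpace A]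

theorem eventually_norm_pow_lt_pow {a : A} {r : ℝ}
    (h : spectralRadius ℂ a < ENNReal.ofReal r) : ∀ᶠ k : ℕ in atTop, ‖a ^ k‖ < r ^ k := by
  have hr : 0 < r := ENNReal.ofReal_pos.mp (lt_of_le_of_lt bot_le h)
  filter_upwards [(spectrum.pow_norm_pow_one_div_tendsto_nhds_spectralRadius a).eventually_lt_const
    h, eventually_ge_atTop 1] with k hk hk1
  rw [ENNReal.ofReal_lt_ofReal_iff hr] at hk
  have hk0 : (k : ℝ) ≠ 0 := by positivity
  calc ‖a ^ k‖ = (‖a ^ k‖ ^ (1 / k : ℝ)) ^ k := by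
        rw [← Real.rpow_natCast, ← Real.rpow_mul (norm_nonneg _), one_div_mul_cancel hk0,
          Real.rpow_one]
    _ < r ^ k := by gcongr

theorem summable_pow_smul_of_spectralRadius_lt {a : A} {c : ℝ}
    (h : spectralRadius ℂ a < ENNReal.ofReal c) : Summable fun k : ℕ => ((c⁻¹ : ℂ) • a) ^ k := by
  obtain ⟨r, hr0, har, hrc⟩ := ENNReal.lt_iff_exists_real_btwn.mp h
  have hc : 0 < c := ENNReal.ofReal_pos.mp (lt_of_le_of_lt bot_le hrc)
  have hrc : r < c := (ENNReal.ofReal_lt_ofReal_iff hc).mp hrc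
  refine Summable.of_norm_bounded_eventually
    (summable_geometric_of_lt_one (by positivity) ((div_lt_one hc).mpr hrc)) ?_
  rw [Nat.cofinite_eq_atTop]
  filter_upwards [eventually_norm_pow_lt_pow har] with k hk
  rw [smul_pow, norm_smul, norm_pow, norm_inv, Complex.norm_real, Real.norm_of_nonneg hc.le,
    div_pow, div_eq_inv_mul, inv_pow]
  gcongr

end Gelfand

namespace Matrix

theorem exists_mulVec_eq_smul_of_mem_spectrum {K ι : Type*} [Field K] [Fintype ι]
    [DecidableEq ι] {M : Matrix ι ι K} {z : K} (h : z ∈ spectrum K M) :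
    ∃ v ≠ 0, M *ᵥ v = z • v := by
  rw [spectrum.mem_iff, isUnit_iff_isUnit_det, isUnit_iff_ne_zero, not_not,
    ← exists_mulVec_eq_zero_iff] at h
  obtain ⟨v, hv, hMv⟩ := h
  refine ⟨v, hv, ?_⟩
  rwa [Algebra.algebraMap_eq_smul_one, sub_mulVec, smul_mulVec, one_mulVec, sub_eq_zero,
    eq_comm] at hMv

theorem submatrix_mulVec_restrict {κ m ι R : Type*} [Fintype ι] [NonUnitalNonAssocSemiring R]
    (A : Matrix κ ι R) (e : m → κ) {I : Finset ι} {v : ι → R} (hv : ∀ j ∉ I, v j = 0) :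
    A.submatrix e ((↑) : I → ι) *ᵥ (fun j : I => v j) = fun k => (A *ᵥ v) (e k) := by
  ext k
  simp only [mulVec, dotProduct, submatrix_apply]
  rw [Finset.sum_coe_sort I fun j => A (e k) j * v j]
  exact Finset.sum_subset (Finset.subset_univ I) fun j _ hj => by rw [hv j hj, mul_zero]

variable {ι R : Type*} [Fintype ι] [Semiring R] [PartialOrder R] [IsOrderedRing R]

theorem mulVec_apply_nonneg {Q : Matrix ι ι R} (hQ : ∀ i j, 0 ≤ Q i j) {v : ι → R}
    (hv : ∀ i, 0 ≤ v i) (i : ι) : 0 ≤ (Q *ᵥ v) i :=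
  dotProduct_nonneg_of_nonneg (hQ i) hv

theorem mulVec_apply_le_mulVec_apply {A B : Matrix ι ι R} {u v : ι → R}
    (hA : ∀ i j, 0 ≤ A i j) (hAB : ∀ i j, A i j ≤ B i j) (hu : ∀ i, 0 ≤ u i)
    (huv : ∀ i, u i ≤ v i) (i : ι) : (A *ᵥ u) i ≤ (B *ᵥ v) i :=
  (dotProduct_le_dotProduct_of_nonneg_right (hAB i) hu).trans
    (dotProduct_le_dotProduct_of_nonneg_left huv fun j => (hA i j).trans (hAB i j))

theorem norm_mulVec_map_apply_le {Q : Matrix ι ι ℝ} (hQ : ∀ i j, 0 ≤ Q i j) (v : ι → ℂ)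
    (i : ι) : ‖(Q.map (algebraMap ℝ ℂ) *ᵥ v) i‖ ≤ (Q *ᵥ fun j => ‖v j‖) i := by
  simp only [mulVec, dotProduct, map_apply]
  refine (norm_sum_le _ _).trans_eq (Finset.sum_congr rfl fun j _ => ?_)
  rw [norm_mul, norm_algebraMap', Real.norm_of_nonneg (hQ i j)]

theorem le_of_smul_le_mulVec_of_mulVec_le_smul {Q : Matrix ι ι ℝ}
    (hQ : ∀ i j, 0 ≤ Q i j) {p w : ι → ℝ} {μ c : ℝ} (hp : ∀ i, 0 ≤ p i)
    (hp0 : ∃ i, 0 < p i) (hw : ∀ i, 0 < w i) (hμ : ∀ i, μ * p i ≤ (Q *ᵥ p) i)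
    (hc : ∀ i, (Q *ᵥ w) i ≤ c * w i) : μ ≤ c := by
  obtain ⟨i₀, hi₀⟩ := hp0
  have : Nonempty ι := ⟨i₀⟩
  obtain ⟨k, hk⟩ := Finite.exists_max fun i => p i / w i
  set m := p k / w k
  have hm : 0 < m := (div_pos hi₀ (hw i₀)).trans_le (hk i₀)
  have hpw : ∀ i, p i ≤ (m • w) i := fun i => (div_le_iff₀ (hw i)).mp (hk i)
  have hpk : p k = m * w k := (div_mul_cancel₀ _ (hw k).ne').symm
  have hpk0 : 0 < p k := by rw [hpk]; exact mul_pos hm (hw k)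
  refine le_of_mul_le_mul_right ?_ hpk0
  calc μ * p k ≤ (Q *ᵥ p) k := hμ k
    _ ≤ (Q *ᵥ (m • w)) k := mulVec_apply_le_mulVec_apply hQ (fun _ _ => le_rfl) hp hpw k
    _ = m * (Q *ᵥ w) k := by rw [mulVec_smul, Pi.smul_apply, smul_eq_mul]
    _ ≤ m * (c * w k) := by gcongr; exact hc k
    _ = c * p k := by rw [hpk]; ring

end Matrix

section

variable {n : ℕ}

theorem specRad_nonneg (Q : Matrix (Fin n) (Fin n) ℝ) : 0 ≤ specRad Q :=
  ENNReal.toReal_nonneg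

theorem spectralRadius_map_ne_top (Q : Matrix (Fin n) (Fin n) ℝ) :
    spectralRadius ℂ (Q.map (algebraMap ℝ ℂ)) ≠ ⊤ := by
  refine ne_top_of_le_ne_top (b := ‖Q.map (algebraMap ℝ ℂ)‖₊ * ‖(1 : Matrix (Fin n) (Fin n) ℂ)‖₊)
    ENNReal.coe_ne_top (iSup₂_le fun k hk => ?_)
  exact ENNReal.coe_le_coe.mpr (spectrum.norm_le_norm_mul_of_mem hk)

theorem ofReal_specRad (Q : Matrix (Fin n) (Fin n) ℝ) :
    ENNReal.ofReal (specRad Q) = spectralRadius ℂ (Q.map (algebraMap ℝ ℂ)) :=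
  ENNReal.ofReal_toReal (spectralRadius_map_ne_top Q)

theorem norm_le_specRad_of_mem_spectrum {Q : Matrix (Fin n) (Fin n) ℝ} {z : ℂ}
    (hz : z ∈ spectrum ℂ (Q.map (algebraMap ℝ ℂ))) : ‖z‖ ≤ specRad Q := by
  rw [← ENNReal.ofReal_le_ofReal_iff (specRad_nonneg Q), ofReal_specRad, ← coe_nnnorm,
    ENNReal.ofReal_coe_nnreal]
  exact le_iSup₂ (f := fun z (_ : z ∈ spectrum ℂ _) => (‖z‖₊ : ENNReal)) z hz

theorem specRad_le_of_forall_mem_spectrum {Q : Matrix (Fin n) (Fin n) ℝ} {c : ℝ} (hc : 0 ≤ c)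
    (h : ∀ z ∈ spectrum ℂ (Q.map (algebraMap ℝ ℂ)), ‖z‖ ≤ c) : specRad Q ≤ c := by
  refine ENNReal.toReal_le_of_le_ofReal hc (iSup₂_le fun z hz => ?_)
  rw [← ENNReal.ofReal_coe_nnreal, coe_nnnorm]
  exact ENNReal.ofReal_le_ofReal (h z hz)

theorem isOpen_setOf_specRad_lt (r : ℝ) :
    IsOpen {Q : Matrix (Fin n) (Fin n) ℝ | specRad Q < r} := by
  refine isOpen_iff_mem_nhds.mpr fun Q (hQ : specRad Q < r) => ?_
  obtain ⟨r', hQr', hr'⟩ := exists_between hQ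
  have hσ : spectrum ℂ (Q.map (algebraMap ℝ ℂ)) ⊆ Metric.ball 0 r' := fun z hz => by
    simpa using (norm_le_specRad_of_mem_spectrum hz).trans_lt hQr'
  have := (upperHemicontinuous_spectrum ℂ (Matrix (Fin n) (Fin n) ℂ)).forall_isOpen _ _
    Metric.isOpen_ball hσ
  filter_upwards [(continuous_id.matrix_map (continuous_algebraMap ℝ ℂ)).continuousAt.eventually
    this] with P hP
  refine (specRad_le_of_forall_mem_spectrum ((specRad_nonneg Q).trans hQr'.le)
    fun z hz => ?_).trans_lt hr'
  simpa using (mem_ball_zero_iff.mp (hP hz)).le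

theorem summable_pow_smul_of_specRad_lt {Q : Matrix (Fin n) (Fin n) ℝ} {c : ℝ}
    (h : specRad Q < c) : Summable fun k : ℕ => (c⁻¹ • Q) ^ k := by
  have hc : 0 < c := (specRad_nonneg Q).trans_lt h
  have hC := summable_pow_smul_of_spectralRadius_lt (a := Q.map (algebraMap ℝ ℂ)) (c := c)
    (by rwa [← ofReal_specRad, ENNReal.ofReal_lt_ofReal_iff hc])
  have := hC.map Complex.reAddGroupHom.mapMatrix (continuous_id.matrix_map Complex.continuous_re)
  convert this using 2 with k
  have hmap : (c⁻¹ : ℂ) • Q.map (algebraMap ℝ ℂ) = (algebraMap ℝ ℂ).mapMatrix (c⁻¹ • Q) := by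
    ext i j; simp
  rw [Function.comp_apply, hmap, ← map_pow]
  ext i j; simp

-- `w = c⁻¹ (∑ₖ (c⁻¹ Q)ᵏ) 1` is the Neumann series for `(c - Q)⁻¹ 1`.
theorem exists_pos_mulVec_eq_of_specRad_lt {Q : Matrix (Fin n) (Fin n) ℝ}
    (hQ : ∀ i j, 0 ≤ Q i j) {c : ℝ} (h : specRad Q < c) :
    ∃ w : Fin n → ℝ, (∀ i, 0 < w i) ∧ ∀ i, (Q *ᵥ w) i = c * w i - 1 := by
  have hc : 0 < c := (specRad_nonneg Q).trans_lt h
  have hsum := summable_pow_smul_of_specRad_lt h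
  have hS : ∀ i j, 0 ≤ (∑' k, (c⁻¹ • Q) ^ k) i j := fun i j => by
    refine HasSum.nonneg (fun k => ?_) (hsum.hasSum.map (entryAddMonoidHom ℝ i j)
      (continuous_id.matrix_elem i j))
    exact pow_apply_nonneg (fun i j => mul_nonneg (inv_nonneg.mpr hc.le) (hQ i j)) k i j
  set v := (∑' k, (c⁻¹ • Q) ^ k) *ᵥ 1
  have hv : ∀ i, v i - c⁻¹ * (Q *ᵥ v) i = 1 := fun i => by
    have : (1 - c⁻¹ • Q) *ᵥ v = 1 := by
      rw [mulVec_mulVec, hsum.one_sub_mul_tsum_pow, one_mulVec]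
    simpa [sub_mulVec, smul_mulVec] using congrFun this i
  have hv0 : ∀ i, 0 ≤ v i := mulVec_apply_nonneg hS fun _ => zero_le_one
  refine ⟨c⁻¹ • v, fun i => ?_, fun i => ?_⟩
  · have : 0 < v i := by nlinarith [hv i, mulVec_apply_nonneg hQ hv0 i, inv_pos.mpr hc]
    simp only [Pi.smul_apply, smul_eq_mul]
    positivity
  · rw [mulVec_smul, Pi.smul_apply, Pi.smul_apply, smul_eq_mul, smul_eq_mul,
      mul_inv_cancel_left₀ hc.ne']
    linarith [hv i]

theorem specRad_le_of_mulVec_le_smul {Q : Matrix (Fin n) (Fin n) ℝ} (hQ : ∀ i j, 0 ≤ Q i j)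
    {w : Fin n → ℝ} {c : ℝ} (hw : ∀ i, 0 < w i) (hc : 0 ≤ c)
    (h : ∀ i, (Q *ᵥ w) i ≤ c * w i) : specRad Q ≤ c := by
  refine specRad_le_of_forall_mem_spectrum hc fun z hz => ?_
  obtain ⟨v, hv, hQv⟩ := exists_mulVec_eq_smul_of_mem_spectrum hz
  obtain ⟨i, hi⟩ := Function.ne_iff.mp hv
  refine le_of_smul_le_mulVec_of_mulVec_le_smul hQ (fun _ => norm_nonneg _)
    ⟨i, norm_pos_iff.mpr hi⟩ hw (fun j => ?_) h
  have := norm_mulVec_map_apply_le hQ v j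
  rwa [hQv, Pi.smul_apply, smul_eq_mul, norm_mul] at this

theorem specRad_zero : specRad (0 : Matrix (Fin n) (Fin n) ℝ) = 0 :=
  le_antisymm (specRad_le_of_mulVec_le_smul (Q := 0) (fun _ _ => le_rfl) (w := 1)
    (fun _ => one_pos) le_rfl fun i => by simp) (specRad_nonneg 0)

theorem le_specRad_of_smul_le_mulVec_s18 {Q : Matrix (Fin n) (Fin n) ℝ} (hQ : ∀ i j, 0 ≤ Q i j)
    {p : Fin n → ℝ} {μ : ℝ} (hp : ∀ i, 0 ≤ p i) (hp0 : ∃ i, 0 < p i)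
    (h : ∀ i, μ * p i ≤ (Q *ᵥ p) i) : μ ≤ specRad Q := by
  refine le_of_forall_gt_imp_ge_of_dense fun c hc => ?_
  obtain ⟨w, hw, hQw⟩ := exists_pos_mulVec_eq_of_specRad_lt hQ hc
  exact le_of_smul_le_mulVec_of_mulVec_le_smul hQ hp hp0 hw h fun i => by linarith [hQw i]

theorem specRad_le_mul_of_le_smul {A B : Matrix (Fin n) (Fin n) ℝ} (hA : ∀ i j, 0 ≤ A i j)
    (hB : ∀ i j, 0 ≤ B i j) {t : ℝ} (ht : 0 ≤ t) (hAB : ∀ i j, A i j ≤ t * B i j) :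
    specRad A ≤ t * specRad B := by
  have key : ∀ c > specRad B, specRad A ≤ t * c := fun c hc => by
    obtain ⟨w, hw, hBw⟩ := exists_pos_mulVec_eq_of_specRad_lt hB hc
    have hc0 : 0 ≤ c := (specRad_nonneg B).trans hc.le
    refine specRad_le_of_mulVec_le_smul hA hw (by positivity) fun i => ?_
    calc (A *ᵥ w) i ≤ ((t • B) *ᵥ w) i :=
          mulVec_apply_le_mulVec_apply hA hAB (fun i => (hw i).le) (fun _ => le_rfl) i
      _ = t * (c * w i - 1) := by rw [smul_mulVec, Pi.smul_apply, smul_eq_mul, hBw]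
      _ ≤ t * c * w i := by nlinarith
  exact ge_of_tendsto ((continuous_const_mul t).tendsto _ |>.mono_left nhdsWithin_le_nhds)
    (eventually_nhdsWithin_of_forall (s := Set.Ioi (specRad B)) key)

theorem inv_norm_le_sub_specRad [Nonempty (Fin n)] {Q : Matrix (Fin n) (Fin n) ℝ}
    (hQ : ∀ i j, 0 ≤ Q i j) {w : Fin n → ℝ} {c : ℝ} (hw : ∀ i, 0 < w i)
    (hQw : ∀ i, (Q *ᵥ w) i = c * w i - 1) : ‖w‖⁻¹ ≤ c - specRad Q := by
  have hwi : ∀ i, ‖w‖⁻¹ * w i ≤ 1 := fun i => by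
    have : w i ≤ ‖w‖ := (Real.le_norm_self _).trans (norm_le_pi_norm w i)
    rw [inv_mul_le_one₀ ((hw i).trans_le this)]
    exact this
  have hc : 0 ≤ c - ‖w‖⁻¹ := by
    obtain i := Classical.arbitrary (Fin n)
    nlinarith [hQw i, hwi i, hw i, mulVec_apply_nonneg hQ (fun i => (hw i).le) i]
  have := specRad_le_of_mulVec_le_smul hQ hw hc fun i => by nlinarith [hQw i, hwi i]
  linarith

-- The normalised resolvent vectors at `c m ↓ ρ(Q)` accumulate at a Perron vector, because their
-- norms blow up by `inv_norm_le_sub_specRad`.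
theorem exists_nonneg_mulVec_eq_specRad_smul [Nonempty (Fin n)] {Q : Matrix (Fin n) (Fin n) ℝ}
    (hQ : ∀ i j, 0 ≤ Q i j) :
    ∃ v : Fin n → ℝ, (∀ i, 0 ≤ v i) ∧ (∃ i, 0 < v i) ∧ Q *ᵥ v = specRad Q • v := by
  set c : ℕ → ℝ := fun m => specRad Q + 1 / (m + 1)
  choose w hw hQw using fun m : ℕ =>
    exists_pos_mulVec_eq_of_specRad_lt hQ (show specRad Q < c m by simp [c]; positivity)
  have hnorm : ∀ m, 0 < ‖w m‖ := fun m =>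
    norm_pos_iff.mpr (Function.ne_iff.mpr ⟨Classical.arbitrary _, (hw m _).ne'⟩)
  set v : ℕ → Fin n → ℝ := fun m => ‖w m‖⁻¹ • w m
  have hv : ∀ m, v m ∈ Metric.sphere (0 : Fin n → ℝ) 1 := fun m => by
    simp [v, norm_smul, (hnorm m).ne']
  have hQv : ∀ m, Q *ᵥ v m = c m • v m - ‖w m‖⁻¹ • 1 := fun m => by
    ext i
    simp [v, mulVec_smul, hQw m i]
    ring
  obtain ⟨u, hu, φ, hφ, hlim⟩ := (isCompact_sphere (0 : Fin n → ℝ) 1).tendsto_subseq hv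
  have hdiv : Tendsto (fun m => 1 / ((φ m : ℝ) + 1)) atTop (𝓝 0) :=
    tendsto_one_div_add_atTop_nhds_zero_nat.comp hφ.tendsto_atTop
  have hε : Tendsto (fun m => ‖w (φ m)‖⁻¹) atTop (𝓝 0) := by
    refine squeeze_zero (fun m => (inv_pos.mpr (hnorm _)).le) (fun m => ?_) hdiv
    simpa [c] using inv_norm_le_sub_specRad hQ (hw (φ m)) (hQw (φ m))
  have hc : Tendsto (fun m => c (φ m)) atTop (𝓝 (specRad Q)) := by
    simpa [c] using hdiv.const_add (specRad Q)
  have hu0 : ∀ i, 0 ≤ u i := fun i =>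
    ge_of_tendsto' (tendsto_pi_nhds.mp hlim i) fun m =>
      mul_nonneg (inv_pos.mpr (hnorm _)).le (hw _ i).le
  refine ⟨u, hu0, ?_, tendsto_nhds_unique
    ((continuous_const.matrix_mulVec continuous_id).tendsto u |>.comp hlim) ?_⟩
  · have hu1 : u ≠ 0 := by
      rintro rfl
      simp at hu
    obtain ⟨i, hi⟩ := Function.ne_iff.mp hu1
    exact ⟨i, (hu0 i).lt_of_ne' hi⟩
  · have := (hc.smul hlim).sub (hε.smul (tendsto_const_nhds (x := (1 : Fin n → ℝ))))
    rw [zero_smul, sub_zero] at this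
    convert this using 1
    ext m : 1
    exact hQv (φ m)

section Segment

variable {N Δ : Matrix (Fin n) (Fin n) ℝ}

theorem add_smul_apply_nonneg (hN : ∀ i j, 0 ≤ N i j) (hΔ : ∀ i j, 0 ≤ Δ i j) {t : ℝ}
    (ht : 0 ≤ t) (i j : Fin n) : 0 ≤ (N + t • Δ) i j := by
  simp only [Matrix.add_apply, Matrix.smul_apply, smul_eq_mul]
  exact add_nonneg (hN i j) (mul_nonneg ht (hΔ i j))

theorem specRad_add_smul_le_div_mul (hN : ∀ i j, 0 ≤ N i j) (hΔ : ∀ i j, 0 ≤ Δ i j) {a b : ℝ}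
    (ha : 0 < a) (hab : a ≤ b) : specRad (N + b • Δ) ≤ b / a * specRad (N + a • Δ) := by
  refine specRad_le_mul_of_le_smul (add_smul_apply_nonneg hN hΔ (ha.le.trans hab))
    (add_smul_apply_nonneg hN hΔ ha.le) (div_nonneg (ha.le.trans hab) ha.le) fun i j => ?_
  have h1 : 1 ≤ b / a := (one_le_div ha).mpr hab
  simp only [Matrix.add_apply, Matrix.smul_apply, smul_eq_mul]
  rw [mul_add, ← mul_assoc, div_mul_cancel₀ _ ha.ne']
  nlinarith [hN i j]

-- `t` is the supremum of the parameters in `[0, 1]` with `ρ(N + tΔ) < s`: openness of that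
-- condition gives `ρ(N + tΔ) ≥ s`, and `specRad_add_smul_le_div_mul` gives `ρ(N + tΔ) ≤ s`.
theorem exists_specRad_add_smul_eq (hN : ∀ i j, 0 ≤ N i j) (hΔ : ∀ i j, 0 ≤ Δ i j) {s : ℝ}
    (hs : specRad N < s) (hsΔ : s ≤ specRad (N + Δ)) :
    ∃ t ∈ Set.Icc (0 : ℝ) 1, specRad (N + t • Δ) = s := by
  set T := {t ∈ Set.Icc (0 : ℝ) 1 | specRad (N + t • Δ) < s}
  have hopen : IsOpen {t : ℝ | specRad (N + t • Δ) < s} :=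
    (isOpen_setOf_specRad_lt s).preimage
      (continuous_const.add (continuous_id.smul continuous_const))
  have hT1 : BddAbove T := ⟨1, fun t ht => ht.1.2⟩
  have h0T : (0 : ℝ) ∈ T := ⟨⟨le_rfl, zero_le_one⟩, by simpa using hs⟩
  have hright : ∀ a ∈ Set.Ico (0 : ℝ) 1, specRad (N + a • Δ) < s → ∃ t ∈ T, a < t := by
    intro a ha hfa
    obtain ⟨u, hau, hu⟩ := exists_Ico_subset_of_mem_nhds (hopen.mem_nhds hfa) ⟨1, ha.2⟩
    have h1 : a < min u 1 := lt_min hau ha.2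
    have h2 := min_le_left u 1
    have h3 := min_le_right u 1
    exact ⟨(a + min u 1) / 2, ⟨⟨by linarith [ha.1], by linarith⟩, hu ⟨by linarith, by linarith⟩⟩,
      by linarith⟩
  set t := sSup T
  have ht1 : t ≤ 1 := csSup_le ⟨0, h0T⟩ fun t ht => ht.1.2
  have ht0 : 0 < t := by
    obtain ⟨t', ht', ht'0⟩ := hright 0 ⟨le_rfl, zero_lt_one⟩ (by simpa using hs)
    exact ht'0.trans_le (le_csSup hT1 ht')
  refine ⟨t, ⟨ht0.le, ht1⟩, le_antisymm ?_ ?_⟩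
  · by_contra! hlt
    have hs0 : 0 < s := (specRad_nonneg N).trans_lt hs
    obtain ⟨t', ht', hlt'⟩ := exists_lt_of_lt_csSup ⟨0, h0T⟩
      (show t * s / specRad (N + t • Δ) < t by
        rw [div_lt_iff₀ (hs0.trans hlt)]; exact mul_lt_mul_of_pos_left hlt ht0)
    have ht'0 : 0 < t' :=
      lt_of_le_of_lt (div_nonneg (mul_nonneg ht0.le hs0.le) (specRad_nonneg _)) hlt'
    rw [div_lt_iff₀ (hs0.trans hlt)] at hlt'
    have := specRad_add_smul_le_div_mul hN hΔ ht'0 (le_csSup hT1 ht')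
    rw [div_mul_eq_mul_div, le_div_iff₀ ht'0] at this
    nlinarith [ht'.2]
  · by_contra! hlt
    obtain ⟨t', ht', htt'⟩ := hright t ⟨ht0.le, ht1.lt_of_ne fun h => by
      rw [h, one_smul] at hlt; linarith⟩ hlt
    exact htt'.not_ge (le_csSup hT1 ht')

end Segment

theorem not_isR0Matrix_of_mulVec_eq_zero {A : Matrix (Fin n) (Fin n) ℝ} {v : Fin n → ℝ}
    (hv : ∀ i, 0 ≤ v i) (hv0 : ∃ i, 0 < v i) (hAv : A *ᵥ v = 0) : ¬ IsR0Matrix A := by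
  set I := Finset.univ.filter fun i => 0 < v i
  have hvI : ∀ j ∉ I, v j = 0 := fun j hj =>
    le_antisymm (not_lt.mp fun h => hj (Finset.mem_filter.mpr ⟨Finset.mem_univ j, h⟩)) (hv j)
  obtain ⟨i₀, hi₀⟩ := hv0
  refine fun hR0 => hR0 I ⟨i₀, Finset.mem_filter.mpr ⟨Finset.mem_univ _, hi₀⟩⟩
    ⟨fun j => v j, fun i => ?_, fun j => ?_, fun i => (Finset.mem_filter.mp i.2).2⟩
  · rw [submatrix_mulVec_restrict A _ hvI, hAv]; rfl
  · rw [submatrix_mulVec_restrict A _ hvI, hAv]; exact le_rfl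

theorem IsMMatrix.not_forall_mulVec_nonpos {M : Matrix (Fin n) (Fin n) ℝ} (hM : IsMMatrix M)
    {y : Fin n → ℝ} (hy : ∀ i, 0 ≤ y i) (hy0 : ∃ i, 0 < y i) : ¬ ∀ i, (M *ᵥ y) i ≤ 0 := by
  obtain ⟨s, N, hN, rfl, hs⟩ := hM
  refine fun hMy => hs.not_ge (le_specRad_of_smul_le_mulVec_s18 hN hy hy0 fun i => ?_)
  have := hMy i
  rw [sub_mulVec, smul_mulVec, one_mulVec, Pi.sub_apply, Pi.smul_apply, smul_eq_mul] at this
  linarith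

theorem isMMatrix_of_smul_le_mulVec {B : Matrix (Fin n) (Fin n) ℝ}
    (hB : ∀ i j, i ≠ j → B i j ≤ 0) {w : Fin n → ℝ} (hw : ∀ i, 0 < w i) {ε : ℝ} (hε : 0 < ε)
    (h : ∀ i, ε * w i ≤ (B *ᵥ w) i) : IsMMatrix B := by
  set K := ∑ i, |B i i|
  have hK : 0 ≤ K := Finset.sum_nonneg fun i _ => abs_nonneg _
  have hBK : ∀ i, B i i ≤ K := fun i => (le_abs_self _).trans
    (Finset.single_le_sum (fun j _ => abs_nonneg (B j j)) (Finset.mem_univ i))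
  have hN : ∀ i j, 0 ≤ ((K + ε) • (1 : Matrix (Fin n) (Fin n) ℝ) - B) i j := fun i j => by
    rw [Matrix.sub_apply, Matrix.smul_apply, Matrix.one_apply, smul_eq_mul]
    split_ifs with hij
    · subst hij; linarith [hBK i]
    · linarith [hB i j hij]
  refine ⟨K + ε, _, hN, (sub_sub_cancel _ _).symm, ?_⟩
  refine (specRad_le_of_mulVec_le_smul hN hw hK fun i => ?_).trans_lt (lt_add_of_pos_right K hε)
  rw [sub_mulVec, smul_mulVec, one_mulVec, Pi.sub_apply, Pi.smul_apply, smul_eq_mul]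
  linarith [h i]

theorem compMatrix_mulVec_apply_le {A : Matrix (Fin n) (Fin n) ℝ} {y : Fin n → ℝ}
    (hy : ∀ i, 0 ≤ y i) (i : Fin n) : (compMatrix A *ᵥ y) i ≤ |(A *ᵥ y) i| := by
  have hsplit : ∀ f : Fin n → ℝ, ∑ j, f j = f i + ∑ j ∈ Finset.univ.erase i, f j := fun f =>
    (Finset.add_sum_erase _ f (Finset.mem_univ i)).symm
  simp only [mulVec, dotProduct]
  rw [hsplit, hsplit (fun j => A i j * y j)]
  have hoff : ∑ j ∈ Finset.univ.erase i, compMatrix A i j * y j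
      = -∑ j ∈ Finset.univ.erase i, |A i j| * y j := by
    rw [← Finset.sum_neg_distrib]
    refine Finset.sum_congr rfl fun j hj => ?_
    rw [compMatrix, if_neg (Finset.ne_of_mem_erase hj).symm, neg_mul]
  have habs : |∑ j ∈ Finset.univ.erase i, A i j * y j|
      ≤ ∑ j ∈ Finset.univ.erase i, |A i j| * y j :=
    (Finset.abs_sum_le_sum_abs _ _).trans_eq (Finset.sum_congr rfl fun j _ => by
      rw [abs_mul, abs_of_nonneg (hy j)])
  have htri := abs_sub (A i i * y i + ∑ j ∈ Finset.univ.erase i, A i j * y j)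
    (∑ j ∈ Finset.univ.erase i, A i j * y j)
  rw [add_sub_cancel_right, abs_mul, abs_of_nonneg (hy i)] at htri
  rw [hoff, compMatrix, if_pos rfl]
  linarith

theorem compMatrix_mulVec_apply_nonpos {A : Matrix (Fin n) (Fin n) ℝ} {y : Fin n → ℝ}
    (hy : ∀ i, 0 ≤ y i) {i : Fin n} (hyi : y i = 0) : (compMatrix A *ᵥ y) i ≤ 0 := by
  simp only [mulVec, dotProduct]
  refine Finset.sum_nonpos fun j _ => ?_
  by_cases h : i = j
  · rw [← h, hyi, mul_zero]
  · rw [compMatrix, if_neg h]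
    exact mul_nonpos_of_nonpos_of_nonneg (neg_nonpos.mpr (abs_nonneg _)) (hy j)

theorem IsHMatrix.isR0Matrix {A : Matrix (Fin n) (Fin n) ℝ} (hA : IsHMatrix A) :
    IsR0Matrix A := by
  rintro I ⟨i₀, hi₀⟩ ⟨x, hAx, -, hx⟩
  set y : Fin n → ℝ := fun j => if h : j ∈ I then x ⟨j, h⟩ else 0
  have hyI : ∀ j ∉ I, y j = 0 := fun j hj => dif_neg hj
  have hy : ∀ j, 0 ≤ y j := fun j => by
    by_cases h : j ∈ I
    · exact (dif_pos h).trans_ge (hx _).le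
    · exact (hyI j h).ge
  have hAy : ∀ i ∈ I, (A *ᵥ y) i = 0 := fun i hi => by
    have := hAx ⟨i, hi⟩
    rwa [show x = fun j : I => y j from funext fun j => (dif_pos j.2 : y j = x j).symm,
      submatrix_mulVec_restrict A _ hyI] at this
  refine hA.not_forall_mulVec_nonpos hy ⟨i₀, (dif_pos hi₀).trans_gt (hx _)⟩ fun i => ?_
  by_cases hi : i ∈ I
  · simpa [hAy i hi] using compMatrix_mulVec_apply_le (A := A) hy i
  · exact compMatrix_mulVec_apply_nonpos hy (hyI i hi)

section Interval

variable {N Δ : Matrix (Fin n) (Fin n) ℝ} {s : ℝ}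

theorem isHMatrix_of_specRad_lt (hN : ∀ i j, 0 ≤ N i j) (hΔ : ∀ i j, 0 ≤ Δ i j)
    (h : specRad (N + Δ) < s) {A : Matrix (Fin n) (Fin n) ℝ}
    (hA : memInterval (s • 1 - N - Δ) (s • 1 - N + Δ) A) : IsHMatrix A := by
  obtain ⟨c, hρc, hcs⟩ := exists_between h
  obtain ⟨w, hw, hNw⟩ := exists_pos_mulVec_eq_of_specRad_lt (Q := N + Δ)
    (fun i j => add_nonneg (hN i j) (hΔ i j)) hρc
  have hle : ∀ i j, (s • 1 - (N + Δ)) i j ≤ compMatrix A i j := fun i j => by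
    have hAij := hA i j
    by_cases hij : i = j
    · subst hij
      simp only [Matrix.sub_apply, Matrix.add_apply, Matrix.smul_apply, Matrix.one_apply_eq,
        smul_eq_mul, mul_one] at hAij ⊢
      rw [compMatrix, if_pos rfl]
      linarith [le_abs_self (A i i)]
    · simp only [Matrix.sub_apply, Matrix.add_apply, Matrix.smul_apply, Matrix.one_apply_ne hij,
        smul_eq_mul, mul_zero] at hAij ⊢
      rw [compMatrix, if_neg hij]
      have : |A i j| ≤ N i j + Δ i j := abs_le.mpr ⟨by linarith, by linarith [hN i j]⟩
      linarith
  refine isMMatrix_of_smul_le_mulVec (fun i j hij => by simp [compMatrix, hij]) hw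
    (sub_pos.mpr hcs) fun i => ?_
  calc (s - c) * w i ≤ ((s • 1 - (N + Δ)) *ᵥ w) i := by
        rw [sub_mulVec, smul_mulVec, one_mulVec, Pi.sub_apply, Pi.smul_apply, smul_eq_mul,
          hNw i]
        linarith
    _ ≤ (compMatrix A *ᵥ w) i :=
        dotProduct_le_dotProduct_of_nonneg_right (hle i) fun j => (hw j).le

theorem exists_not_isR0Matrix_of_le_specRad (hN : ∀ i j, 0 ≤ N i j) (hΔ : ∀ i j, 0 ≤ Δ i j)
    (hs : specRad N < s) (h : s ≤ specRad (N + Δ)) :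
    ∃ A, memInterval (s • 1 - N - Δ) (s • 1 - N + Δ) A ∧ ¬ IsR0Matrix A := by
  obtain ⟨t, ⟨ht0, ht1⟩, hts⟩ := exists_specRad_add_smul_eq hN hΔ hs h
  have hQ := add_smul_apply_nonneg hN hΔ ht0
  -- on an empty index type every spectral radius is `0`, whereas `ρ(N + tΔ) = s > 0`
  have : Nonempty (Fin n) := by
    by_contra hn
    have := not_nonempty_iff.mp hn
    have := specRad_le_of_mulVec_le_smul hQ isEmptyElim le_rfl isEmptyElim (w := 0)
    linarith [specRad_nonneg N]
  obtain ⟨v, hv, hv0, hQv⟩ := exists_nonneg_mulVec_eq_specRad_smul hQ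
  refine ⟨s • 1 - (N + t • Δ), fun i j => ?_, not_isR0Matrix_of_mulVec_eq_zero hv hv0 ?_⟩
  · simp only [Matrix.sub_apply, Matrix.add_apply, Matrix.smul_apply, smul_eq_mul]
    constructor <;> nlinarith [hΔ i j]
  · rw [sub_mulVec, hQv, hts, smul_mulVec, one_mulVec, sub_self]

theorem forall_isR0Matrix_iff (hN : ∀ i j, 0 ≤ N i j) (hΔ : ∀ i j, 0 ≤ Δ i j)
    (hs : specRad N < s) :
    (∀ A, memInterval (s • 1 - N - Δ) (s • 1 - N + Δ) A → IsR0Matrix A) ↔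
      specRad (N + Δ) < s := by
  refine ⟨fun hR0 => not_le.mp fun h => ?_,
    fun h A hA => (isHMatrix_of_specRad_lt hN hΔ h hA).isR0Matrix⟩
  obtain ⟨A, hA, hnA⟩ := exists_not_isR0Matrix_of_le_specRad hN hΔ hs h
  exact hnA (hR0 A hA)

theorem forall_isHMatrix_iff (hN : ∀ i j, 0 ≤ N i j) (hΔ : ∀ i j, 0 ≤ Δ i j)
    (hs : specRad N < s) :
    (∀ A, memInterval (s • 1 - N - Δ) (s • 1 - N + Δ) A → IsHMatrix A) ↔
      specRad (N + Δ) < s :=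
  ⟨fun hH => (forall_isR0Matrix_iff hN hΔ hs).mp fun A hA => (hH A hA).isR0Matrix,
    fun h _ => isHMatrix_of_specRad_lt hN hΔ h⟩

end Interval

end

theorem stmt_18 {n : ℕ} (Al Au : Matrix (Fin n) (Fin n) ℝ)
    (hle : ∀ i j, Al i j ≤ Au i j)
    (Ac : Matrix (Fin n) (Fin n) ℝ) (hAc : Ac = (1/2 : ℝ) • (Al + Au)) (Δ : Matrix (Fin n) (Fin n) ℝ) (hΔ : Δ = (1/2 : ℝ) • (Au - Al)) :
    (IsMMatrix Ac →
      ((∀ A : Matrix (Fin n) (Fin n) ℝ, memInterval Al Au A → IsR0Matrix A) ↔ (∀ A : Matrix (Fin n) (Fin n) ℝ, memInterval Al Au A → IsHMatrix A))) ∧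
    (Ac = (1 : Matrix (Fin n) (Fin n) ℝ) →
      ((∀ A : Matrix (Fin n) (Fin n) ℝ, memInterval Al Au A → IsR0Matrix A) ↔ specRad Δ < 1)) := by
  have hΔ0 : ∀ i j, 0 ≤ Δ i j := fun i j => by
    simp only [hΔ, Matrix.smul_apply, Matrix.sub_apply, smul_eq_mul]
    linarith [hle i j]
  have hAl : Al = Ac - Δ := by rw [hAc, hΔ]; module
  have hAu : Au = Ac + Δ := by rw [hAc, hΔ]; module
  rw [hAl, hAu]
  refine ⟨fun ⟨s, N, hN, hAcN, hs⟩ => ?_, fun hAc1 => ?_⟩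
  · rw [hAcN, forall_isR0Matrix_iff hN hΔ0 hs, forall_isHMatrix_iff hN hΔ0 hs]
  · simpa [hAc1] using forall_isR0Matrix_iff (N := 0) (s := 1) (fun _ _ => le_rfl) hΔ0
      (by rw [specRad_zero]; exact one_pos)
end
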